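/- arXiv:math/0512616 — 4 statements merged into one kernel-verified Lean document; each statement's English description precedes it below -/
import Mathlib

section
/- If P is a lattice-face d-polytope with d ≥ 2, then its projection π(P) ⊂ ℝ^{d−1} is a lattice-face (d−1)-polytope. -/
open MeasureTheory Polynomial

noncomputable section

/-- The lattice points of `ℝ^d`: points all of whose coordinates are integers. -/
def latticePts (d : ℕ) : Set (Fin d → ℝ) := {x | ∀ i, ∃ n : ℤ, x i = (n : ℝ)}

/-- The projection `π^{(d-k)} : ℝ^d → ℝ^k` forgetting the last `d - k` coordinates
(for `k ≤ d`; junk value `0` in out-of-range coordinates otherwise). -/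
def projTo (d k : ℕ) (x : Fin d → ℝ) : Fin k → ℝ :=
  fun i => if h : (i : ℕ) < d then x ⟨(i : ℕ), h⟩ else 0

/-- A polytope with vertex set `V ⊆ ℝ^d` is a lattice-face polytope if for every
`0 ≤ k ≤ d-1` and every `(k+1)`-subset `U ⊆ V`, `π^{(d-k)}(aff(U) ∩ ℤ^d) = ℤ^k`. -/
def IsLatticeFace (d : ℕ) (V : Finset (Fin d → ℝ)) : Prop :=
  ∀ k : ℕ, k < d → ∀ U : Finset (Fin d → ℝ), U ⊆ V → U.card = k + 1 →
    projTo d k '' ((affineSpan ℝ (U : Set (Fin d → ℝ)) : Set (Fin d → ℝ)) ∩ latticePts d)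
      = latticePts k

/-- The last coordinate of a point of `ℝ^d`. -/
def lastCoord (d : ℕ) (x : Fin d → ℝ) : ℝ :=
  if h : 0 < d then x ⟨d - 1, by omega⟩ else 0

/-- The negative boundary `NB(P)`: points of `P` minimizing the last coordinate in
their fiber over `π(P)`. -/
def NB (d : ℕ) (P : Set (Fin d → ℝ)) : Set (Fin d → ℝ) :=
  {x | x ∈ P ∧ ∀ y ∈ P, projTo d (d - 1) y = projTo d (d - 1) x → lastCoord d x ≤ lastCoord d y}

/-- The positive boundary `PB(P)`: points of `P` maximizing the last coordinate in
their fiber over `π(P)`. -/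
def PB (d : ℕ) (P : Set (Fin d → ℝ)) : Set (Fin d → ℝ) :=
  {x | x ∈ P ∧ ∀ y ∈ P, projTo d (d - 1) y = projTo d (d - 1) x → lastCoord d y ≤ lastCoord d x}

/-- `i(P,m)`: the number of lattice points in the dilate `mP`. -/
def ehr (d : ℕ) (P : Set (Fin d → ℝ)) (m : ℕ) : ℕ :=
  (latticePts d ∩ (fun x => (m : ℝ) • x) '' P).ncard

/-- `î(P,m)`: the number of lattice points in the interior of the dilate `mP`. -/
def intEhr (d : ℕ) (P : Set (Fin d → ℝ)) (m : ℕ) : ℕ :=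
  (latticePts d ∩ interior ((fun x => (m : ℝ) • x) '' P)).ncard

/-- The `j`-th coordinate (`0`-indexed) of a point of `ℝ^d`, junk value `0` if `j ≥ d`. -/
def coordN {d : ℕ} (w : Fin d → ℝ) (j : ℕ) : ℝ := if h : j < d then w ⟨j, h⟩ else 0

/-- The vertex occurring in row `p` (0-indexed) of the matrices `X(σ,k)`, `Y(σ,k)`:
vertex `v_{σ(p+1)}` for `p < k`, and `v_{d+1}` for the last row of `X(σ,k)`. -/
def rowVert (d : ℕ) (v : Fin (d + 1) → Fin d → ℝ) (σ : Equiv.Perm (Fin d)) (k p : ℕ) :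
    Fin d → ℝ :=
  if h : p < k ∧ p < d then v (Fin.castSucc (σ ⟨p, h.2⟩)) else v (Fin.last d)

/-- The matrix `X(σ,k)` with rows `(1, x_{σ(i),1},…,x_{σ(i),k})` for `1 ≤ i ≤ k`
followed by `(1, x_{d+1,1},…,x_{d+1,k})`. -/
def Xmat (d : ℕ) (v : Fin (d + 1) → Fin d → ℝ) (σ : Equiv.Perm (Fin d)) (k : ℕ) :
    Matrix (Fin (k + 1)) (Fin (k + 1)) ℝ :=
  Matrix.of fun p q =>
    if (q : ℕ) = 0 then 1 else coordN (rowVert d v σ k (p : ℕ)) ((q : ℕ) - 1)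

/-- The matrix `Y(σ,k)` with rows `(1, x_{σ(i),1},…,x_{σ(i),k-1})` for `1 ≤ i ≤ k`. -/
def Ymat (d : ℕ) (v : Fin (d + 1) → Fin d → ℝ) (σ : Equiv.Perm (Fin d)) (k : ℕ) :
    Matrix (Fin k) (Fin k) ℝ :=
  Matrix.of fun p q =>
    if (q : ℕ) = 0 then 1 else coordN (rowVert d v σ k (p : ℕ)) ((q : ℕ) - 1)

/-- The matrix `X̃(σ,k;x)`: `X(σ,k)` with its last row replaced by `(1, x_1,…,x_k)`. -/
def Xtil (d : ℕ) (v : Fin (d + 1) → Fin d → ℝ) (σ : Equiv.Perm (Fin d)) (k : ℕ)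
    (x : Fin d → ℝ) : Matrix (Fin (k + 1)) (Fin (k + 1)) ℝ :=
  Matrix.of fun p q =>
    if (q : ℕ) = 0 then 1
    else if (p : ℕ) < k then coordN (rowVert d v σ k (p : ℕ)) ((q : ℕ) - 1)
    else coordN x ((q : ℕ) - 1)

/-- `z(σ,k) = det X(σ,k) / det Y(σ,k)`; note `z(σ,0) = 1`. -/
def zc (d : ℕ) (v : Fin (d + 1) → Fin d → ℝ) (σ : Equiv.Perm (Fin d)) (k : ℕ) : ℝ :=
  (Xmat d v σ k).det / (Ymat d v σ k).det

/-- The minor `m(σ,k;j)` of `X̃(σ,k;x)` obtained by deleting the last row and the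
`(j+1)`-st column (it does not depend on `x`). -/
def minorM (d : ℕ) (v : Fin (d + 1) → Fin d → ℝ) (σ : Equiv.Perm (Fin d)) (k j : ℕ) : ℝ :=
  (Matrix.of fun p q : Fin k =>
    Xmat d v σ k (Fin.castSucc p) (if (q : ℕ) < j + 1 then Fin.castSucc q else q.succ)).det

/-- A `d`-simplex with vertices `v_1, …, v_{d+1}` is in general position if its vertices
are affinely independent and for every `0 ≤ k ≤ d-1` and every `(k+1)`-subset `U` of the
vertex set, `π^{(d-k)}(conv U)` is a `k`-simplex. -/
def SimplexGenPos (d : ℕ) (v : Fin (d + 1) → Fin d → ℝ) : Prop :=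
  AffineIndependent ℝ v ∧
    ∀ k : ℕ, k < d → ∀ U : Finset (Fin (d + 1)), U.card = k + 1 →
      affineSpan ℝ (projTo d k '' (v '' (U : Set (Fin (d + 1))))) = ⊤

/-- A lattice-face `d`-simplex, given by its `d+1` affinely independent vertices. -/
def SimplexLatticeFace (d : ℕ) (v : Fin (d + 1) → Fin d → ℝ) : Prop :=
  AffineIndependent ℝ v ∧
    ∀ k : ℕ, k < d → ∀ U : Finset (Fin (d + 1)), U.card = k + 1 →
      projTo d k ''
          ((affineSpan ℝ (v '' (U : Set (Fin (d + 1)))) : Set (Fin d → ℝ)) ∩ latticePts d)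
        = latticePts k

open scoped Classical in
/-- The sign of a facet `F` of `P`: `+1` if `F` has a relative-interior point on the
positive boundary, `-1` if on the negative boundary, `0` otherwise. -/
def facetSign (d : ℕ) (P F : Set (Fin d → ℝ)) : ℝ :=
  if ∃ x ∈ intrinsicInterior ℝ F, x ∈ PB d P then 1
  else if ∃ x ∈ intrinsicInterior ℝ F, x ∈ NB d P then -1
  else 0

/-- The Bernoulli polynomial `B_n(x)`, as a real polynomial. -/
def bernR (n : ℕ) : Polynomial ℝ := (Polynomial.bernoulli n).map (algebraMap ℚ ℝ)

/-- The `k`-th power sum polynomial `P_k(x) = (B_{k+1}(x+1) - B_{k+1}(0))/(k+1)`. -/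
def PkR (k : ℕ) : Polynomial ℝ :=
  Polynomial.C (((k : ℝ) + 1)⁻¹) *
    ((bernR (k + 1)).comp (Polynomial.X + 1) - Polynomial.C ((bernR (k + 1)).eval 0))

/-- The extension of the summation operation: for a polynomial `h(s) = Σ_k h_k s^k`,
`Σ_{s=1}^{u} h := h_0 u + Σ_{k ≥ 1} h_k P_k(u)`, as a polynomial in the upper bound `u`. -/
def extSumPoly (h : Polynomial ℝ) : Polynomial ℝ :=
  Polynomial.C (h.coeff 0) * Polynomial.X +
    ∑ k ∈ Finset.Icc 1 h.natDegree, Polynomial.C (h.coeff k) * PkR k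

/-- `fdPoly n a` is the polynomial (in the first variable `a_1`) expressing
`f_{n+1}(a_1, a 0, a 1, …)`, defined recursively by `f_1(a_1) = a_1` and
`f_d(a_1,…,a_d) = Σ_{s=1}^{a_1} f_{d-1}(a_2 s, a_3, …, a_d)` using the extended sum. -/
def fdPoly : ℕ → (ℕ → ℝ) → Polynomial ℝ
  | 0, _ => Polynomial.X
  | n + 1, a =>
      extSumPoly ((fdPoly n (fun i => a (i + 1))).comp (Polynomial.C (a 0) * Polynomial.X))

/-- `f_d(a_1, …, a_d)` where `a_k = a (k-1)` (0-indexed). -/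
def fd (d : ℕ) (a : ℕ → ℝ) : ℝ := (fdPoly (d - 1) (fun i => a (i + 1))).eval (a 0)

/-- `g_d(b_1, …, b_d) = f_d(b_1/b_0, b_2/b_1, …, b_d/b_{d-1})` where `b_k = b k` and
`b 0 = 1` by convention. -/
def gd (d : ℕ) (b : ℕ → ℝ) : ℝ := fd d (fun i => b (i + 1) / b i)

/-- `x̄` for an integer: `x̄ = x` if `x ≥ 0` and `x̄ = -x-1` if `x < 0`. -/
def barNat (n : ℤ) : ℕ := if 0 ≤ n then n.toNat else (-n - 1).toNat

/-- The half-open segment `Ω(conv(0,x))`: `(0,x]` if `x ≥ 0` and `(x,0]` if `x < 0`. -/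
def hoSeg (x : ℝ) : Set ℝ := if 0 ≤ x then Set.Ioc 0 x else Set.Ioc x 0

/-- The previous coordinate `s_{k-1}` of a point `s ∈ ℝ^d`, with `s_0 = 1`. -/
def sPrev (d : ℕ) (s : Fin d → ℝ) (k : Fin d) : ℝ :=
  if (k : ℕ) = 0 then 1 else s ⟨(k : ℕ) - 1, lt_of_le_of_lt (Nat.sub_le _ _) k.isLt⟩

/-- The nested sum `Σ_{s_1=1}^{⌊a_1 sp⌋¯} Σ_{s_2=1}^{⌊a_2 s_1⌋¯} ⋯ 1` over positive
integers. -/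
def nestedCount : ℕ → (ℕ → ℝ) → ℕ → ℕ
  | 0, _, _ => 1
  | n + 1, a, sp =>
      ∑ s ∈ Finset.Icc 1 (barNat ⌊a 0 * (sp : ℝ)⌋), nestedCount n (fun i => a (i + 1)) s

/-- The nested extended sum `Σ_{s_1=1}^{\bar{a_1 s_0}} ⋯ Σ_{s_d=1}^{\bar{a_d s_{d-1}}} 1`,
as a polynomial in `s_0`, where for positive `s` the bar is `a s` if `a > 0` and
`-a s - 1` if `a < 0`. -/
def barNested : ℕ → (ℕ → ℝ) → Polynomial ℝ
  | 0, _ => 1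
  | n + 1, a =>
      (extSumPoly (barNested n (fun i => a (i + 1)))).comp
        (if 0 < a 0 then Polynomial.C (a 0) * Polynomial.X
         else -(Polynomial.C (a 0) * Polynomial.X) - 1)

/-- Row vertex for the hat matrices: `v_{σ(p+1)}` for `p < d`. -/
def rowVert' (d : ℕ) (v : Fin (d + 1) → Fin d → ℝ) (σ : Equiv.Perm (Fin d)) (p : ℕ) :
    Fin d → ℝ :=
  if h : p < d then v (Fin.castSucc (σ ⟨p, h⟩)) else v (Fin.last d)

/-- The matrix `X̂(σ,k)` with entries `x̂_{σ(p),q} = x_{σ(p),q} - x_{d+1,q}`. -/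
def XhatM (d : ℕ) (v : Fin (d + 1) → Fin d → ℝ) (σ : Equiv.Perm (Fin d)) (k : ℕ) :
    Matrix (Fin k) (Fin k) ℝ :=
  Matrix.of fun p q =>
    coordN (rowVert' d v σ (p : ℕ)) (q : ℕ) - coordN (v (Fin.last d)) (q : ℕ)

/-- The matrix `Ŷ(σ,k)` with rows `(1, x̂_{σ(p),1},…,x̂_{σ(p),k-1})`. -/
def YhatM (d : ℕ) (v : Fin (d + 1) → Fin d → ℝ) (σ : Equiv.Perm (Fin d)) (k : ℕ) :
    Matrix (Fin k) (Fin k) ℝ :=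
  Matrix.of fun p q =>
    if (q : ℕ) = 0 then 1
    else coordN (rowVert' d v σ (p : ℕ)) ((q : ℕ) - 1) - coordN (v (Fin.last d)) ((q : ℕ) - 1)

/-- `ẑ(σ,k) = det X̂(σ,k) / det Ŷ(σ,k)`. -/
def zhat (d : ℕ) (v : Fin (d + 1) → Fin d → ℝ) (σ : Equiv.Perm (Fin d)) (k : ℕ) : ℝ :=
  (XhatM d v σ k).det / (YhatM d v σ k).det

end

/-! The projection `π` is linear, so `π(conv V) = conv π(V)` and the vertices `W` of the projected
polytope form a subset of `π(V)`; by Krein–Milman, `conv W = conv π(V)`, so `W` still affinely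
spans `ℝ^{d-1}`. A `(k+1)`-subset of `W` lifts to a `(k+1)`-subset `U'` of `V`. Since `π` maps
`aff(U') ∩ ℤ^d` into `aff(π U') ∩ ℤ^{d-1}` and `π^{(d-1-k)} ∘ π = π^{(d-k)}`, the lattice-face
condition for `U'` yields it for `π U'`. -/

theorem Set.Finite.affineSpan_extremePoints_convexHull {E : Type*} [NormedAddCommGroup E]
    [NormedSpace ℝ E] {s : Set E} (hs : s.Finite) :
    affineSpan ℝ ((convexHull ℝ s).extremePoints ℝ) = affineSpan ℝ s := by
  have hext : ((convexHull ℝ s).extremePoints ℝ).Finite :=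
    hs.subset extremePoints_convexHull_subset
  have hhull : convexHull ℝ ((convexHull ℝ s).extremePoints ℝ) = convexHull ℝ s := by
    rw [← (hext.isClosed_convexHull (𝕜 := ℝ)).closure_eq]
    exact closure_convexHull_extremePoints (hs.isCompact_convexHull (𝕜 := ℝ))
      (convex_convexHull ℝ s)
  rw [← affineSpan_convexHull, hhull, affineSpan_convexHull]

theorem Finset.exists_card_eq_of_coe_subset_image {α β : Type*} {f : α → β} {s : Set α}
    {t : Finset β} (h : (t : Set β) ⊆ f '' s) :
    ∃ t' : Finset α, (t' : Set α) ⊆ s ∧ f '' t' = t ∧ t'.card = t.card := by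
  classical
  rcases t.eq_empty_or_nonempty with rfl | ⟨b, hb⟩
  · exact ⟨∅, by simp⟩
  obtain ⟨a, -⟩ := h hb
  have : Nonempty α := ⟨a⟩
  choose! g hgs hfg using fun b (hb : b ∈ t) => h hb
  have hfg' : Set.LeftInvOn f g t := fun b hb => hfg b hb
  refine ⟨t.image g, ?_, ?_, ?_⟩
  · rw [Finset.coe_image, Set.image_subset_iff]
    exact hgs
  · rw [Finset.coe_image, hfg'.image_image]
  · exact Finset.card_image_of_injOn hfg'.injOn

def projToLinear (d k : ℕ) : (Fin d → ℝ) →ₗ[ℝ] (Fin k → ℝ) where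
  toFun := projTo d k
  map_add' x y := by
    funext i
    simp only [projTo, Pi.add_apply]
    split <;> simp
  map_smul' c x := by
    funext i
    simp only [projTo, Pi.smul_apply, RingHom.id_apply, smul_eq_mul]
    split <;> simp

theorem projToLinear_surjective {d k : ℕ} (hk : k ≤ d) :
    Function.Surjective (projToLinear d k) := by
  intro y
  refine ⟨fun j => if h : (j : ℕ) < k then y ⟨j, h⟩ else 0, funext fun i => ?_⟩
  have hi : (i : ℕ) < d := i.isLt.trans_le hk
  simp only [projToLinear, LinearMap.coe_mk, AddHom.coe_mk, projTo, hi, i.isLt, dif_pos]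

theorem projTo_projTo {d m k : ℕ} (hkm : k ≤ m) (x : Fin d → ℝ) :
    projTo m k (projTo d m x) = projTo d k x := by
  funext i
  have him : (i : ℕ) < m := i.isLt.trans_le hkm
  simp only [projTo, him, dif_pos]

theorem projTo_mem_latticePts {d k : ℕ} {x : Fin d → ℝ} (hx : x ∈ latticePts d) :
    projTo d k x ∈ latticePts k := by
  intro i
  unfold projTo
  split_ifs
  · exact hx _
  · exact ⟨0, Int.cast_zero.symm⟩

theorem image_projTo_convexHull (d k : ℕ) (s : Set (Fin d → ℝ)) :
    projTo d k '' convexHull ℝ s = convexHull ℝ (projTo d k '' s) :=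
  (projToLinear d k).image_convexHull s

theorem projTo_mem_affineSpan {d k : ℕ} {s : Set (Fin d → ℝ)} {x : Fin d → ℝ}
    (hx : x ∈ affineSpan ℝ s) : projTo d k x ∈ affineSpan ℝ (projTo d k '' s) := by
  change projToLinear d k x ∈ affineSpan ℝ ((projToLinear d k).toAffineMap '' s)
  rw [← AffineSubspace.map_span]
  exact ⟨x, hx, rfl⟩

theorem affineSpan_image_projTo_eq_top {d k : ℕ} (hk : k ≤ d) {s : Set (Fin d → ℝ)}
    (hs : affineSpan ℝ s = ⊤) : affineSpan ℝ (projTo d k '' s) = ⊤ :=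
  AffineMap.span_eq_top_of_surjective (f := (projToLinear d k).toAffineMap)
    (projToLinear_surjective hk) hs

theorem IsLatticeFace.of_coe_subset_image_projTo {d m : ℕ} (hm : m ≤ d)
    {V : Finset (Fin d → ℝ)} (hV : IsLatticeFace d V) {W : Finset (Fin m → ℝ)}
    (hW : (W : Set (Fin m → ℝ)) ⊆ projTo d m '' V) : IsLatticeFace m W := by
  intro k hk U hUW hcard
  obtain ⟨U', hU'V, hU'U, hU'card⟩ :=
    Finset.exists_card_eq_of_coe_subset_image ((Finset.coe_subset.2 hUW).trans hW)
  have hU' := hV k (hk.trans_le hm) U' (Finset.coe_subset.1 hU'V) (hU'card.trans hcard)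
  refine Set.Subset.antisymm ?_ fun t ht => ?_
  · rintro _ ⟨y, ⟨-, hy⟩, rfl⟩
    exact projTo_mem_latticePts hy
  · rw [← hU'] at ht
    obtain ⟨x, ⟨hxU', hx⟩, rfl⟩ := ht
    refine ⟨projTo d m x, ⟨?_, projTo_mem_latticePts hx⟩, projTo_projTo hk.le x⟩
    rw [← hU'U]
    exact projTo_mem_affineSpan hxU'

theorem projection_of_latticeFace_is_latticeFace_general
    (d : ℕ) (V : Finset (Fin d → ℝ))
    (hspan : affineSpan ℝ (V : Set (Fin d → ℝ)) = ⊤)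
    (hLF : IsLatticeFace d V) :
    ∃ W : Finset (Fin (d - 1) → ℝ),
      (W : Set (Fin (d - 1) → ℝ))
          = Set.extremePoints ℝ (projTo d (d - 1) '' convexHull ℝ (V : Set (Fin d → ℝ)))
        ∧ affineSpan ℝ (W : Set (Fin (d - 1) → ℝ)) = ⊤
        ∧ IsLatticeFace (d - 1) W := by
  have himage_finite := V.finite_toSet.image (projTo d (d - 1))
  rw [image_projTo_convexHull]
  have hext_sub := extremePoints_convexHull_subset (𝕜 := ℝ) (A := projTo d (d - 1) '' ↑V)
  have hext_finite := himage_finite.subset hext_sub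
  refine ⟨hext_finite.toFinset, hext_finite.coe_toFinset, ?_, ?_⟩
  · rw [hext_finite.coe_toFinset, himage_finite.affineSpan_extremePoints_convexHull]
    exact affineSpan_image_projTo_eq_top (Nat.sub_le d 1) hspan
  · refine hLF.of_coe_subset_image_projTo (Nat.sub_le d 1) ?_
    rw [hext_finite.coe_toFinset]
    exact hext_sub

theorem projection_of_latticeFace_is_latticeFace
    (d : ℕ) (hd : 2 ≤ d) (V : Finset (Fin d → ℝ))
    (hspan : affineSpan ℝ (V : Set (Fin d → ℝ)) = ⊤)
    (hvert : (V : Set (Fin d → ℝ))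
      = Set.extremePoints ℝ (convexHull ℝ (V : Set (Fin d → ℝ))))
    (hLF : IsLatticeFace d V) :
    ∃ W : Finset (Fin (d - 1) → ℝ),
      (W : Set (Fin (d - 1) → ℝ))
          = Set.extremePoints ℝ (projTo d (d - 1) '' convexHull ℝ (V : Set (Fin d → ℝ)))
        ∧ affineSpan ℝ (W : Set (Fin (d - 1) → ℝ)) = ⊤
        ∧ IsLatticeFace (d - 1) W :=
  projection_of_latticeFace_is_latticeFace_general d V hspan hLF
end

section
/- Let P be a d-simplex in general position with vertices v_1,…,v_{d+1}, and for 1 ≤ i ≤ d+1 let F_i be the facet of P opposite v_i. Then (i) for every 1 ≤ i ≤ d and every permutation σ ∈ S_d with σ(d) = i, sign(F_i) = sign(det X(σ,d) / det X(σ,d−1)); and (ii) for every σ ∈ S_d, sign(F_{d+1}) = −sign(det X(σ,d) / det Y(σ,d)) = −sign(z(σ,d)). -/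
open MeasureTheory Polynomial

/-!
Put the vertices of a facet first and the opposite vertex `w` last in the matrix of homogeneous
coordinates `(1, x)`. Replacing its last row by `(1, z)` gives an affine function `G` of `z` that
vanishes on the affine hull of the facet, with `G w = det X`, and whose rate of change along the
last coordinate is the cofactor `det Y`. Hence over a point `x` of the facet every point of
`P = conv (facet ∪ {w})` sits at height `a · det X / det Y` above `x` for some `a ≥ 0`: the facet
is the upper boundary when this ratio is negative, and the lower one when it is positive, in which
case moving from a relative-interior point towards `w` shows that no relative-interior point
lies on the upper boundary. General position makes `det Y ≠ 0`. The matrices `X(σ,d)`, `Y(σ,d)`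
and `X(σ,d-1)` of the theorem are such matrices for a suitable order of the vertices, up to one
transposition of rows for the facets `F_i`, `i ≤ d`.
-/

open Filter Topology

theorem affineIndependent_of_affineSpan_eq_top {K V P ι : Type*} [DivisionRing K]
    [AddCommGroup V] [Module K V] [AddTorsor V P] [FiniteDimensional K V] [Fintype ι]
    {p : ι → P} (hcard : Fintype.card ι = Module.finrank K V + 1)
    (h : affineSpan K (Set.range p) = ⊤) : AffineIndependent K p := by
  rw [affineIndependent_iff_finrank_vectorSpan_eq K p hcard, ← direction_affineSpan, h,
    AffineSubspace.direction_top, finrank_top]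

theorem exists_pos_add_smul_sub_mem_of_mem_intrinsicInterior {E : Type*} [NormedAddCommGroup E]
    [NormedSpace ℝ E] {s : Set E} {x z : E} (hx : x ∈ intrinsicInterior ℝ s)
    (hz : z ∈ affineSpan ℝ s) : ∃ t : ℝ, 0 < t ∧ x + t • (x - z) ∈ s := by
  obtain ⟨y, hy, rfl⟩ := mem_intrinsicInterior.mp hx
  let γ : ℝ → affineSpan ℝ s := fun t =>
    ⟨AffineMap.lineMap (y : E) z (-t), AffineMap.lineMap_mem _ y.2 hz⟩
  have hγ : Continuous γ := by fun_prop
  have hγ0 : γ 0 = y := by ext; simp [γ]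
  have hnear : ∀ᶠ t in 𝓝[>] (0 : ℝ), γ t ∈ interior (Subtype.val ⁻¹' s) :=
    nhdsWithin_le_nhds (hγ.continuousAt.preimage_mem_nhds (isOpen_interior.mem_nhds (hγ0 ▸ hy)))
  obtain ⟨t, ht, ht0⟩ := (hnear.and self_mem_nhdsWithin).exists
  refine ⟨t, ht0, ?_⟩
  have := interior_subset ht
  simpa [γ, AffineMap.lineMap_apply, add_comm, neg_smul, ← smul_neg] using this

theorem exists_mem_affineSpan_init_eq {ι : Type*} {m : ℕ} {q : ι → Fin (m + 1) → ℝ}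
    (h : affineSpan ℝ (Set.range (Fin.init ∘ q)) = ⊤) (z : Fin (m + 1) → ℝ) :
    ∃ z' ∈ affineSpan ℝ (Set.range q), Fin.init z' = Fin.init z := by
  let π := (LinearMap.funLeft ℝ ℝ (Fin.castSucc : Fin m → Fin (m + 1))).toAffineMap
  have : Fin.init z ∈ (affineSpan ℝ (Set.range q)).map π := by
    rw [AffineSubspace.map_span, ← Set.range_comp]
    exact h ▸ AffineSubspace.mem_top ℝ _ _
  exact AffineSubspace.mem_map.mp this

section HomogeneousCoordinates

def homCoords (k : ℕ) : (Fin k → ℝ) →ᵃ[ℝ] (Fin (k + 1) → ℝ) where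
  toFun x := Fin.cons 1 x
  linear := (Fin.consLinearEquiv ℝ fun _ => ℝ).toLinearMap ∘ₗ LinearMap.inr ℝ ℝ _
  map_vadd' x v := by
    ext i
    cases i using Fin.cases <;> simp

variable {k : ℕ}

def homMatrix {ι : Type*} (p : ι → Fin k → ℝ) : Matrix ι (Fin (k + 1)) ℝ :=
  Matrix.of fun i => homCoords k (p i)

theorem homCoords_apply (x : Fin k → ℝ) (q : Fin (k + 1)) :
    homCoords k x q = if (q : ℕ) = 0 then 1 else coordN x ((q : ℕ) - 1) := by
  cases q using Fin.cases <;> simp [homCoords, coordN]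

theorem homCoords_castSucc (x : Fin (k + 1) → ℝ) (q : Fin (k + 1)) :
    homCoords (k + 1) x q.castSucc = homCoords k (Fin.init x) q := by
  cases q using Fin.cases <;> rfl

theorem det_homMatrix_ne_zero {p : Fin (k + 1) → Fin k → ℝ} (hp : AffineIndependent ℝ p) :
    (homMatrix p).det ≠ 0 := by
  intro h0
  obtain ⟨c, hc, hc0⟩ := Matrix.exists_vecMul_eq_zero_iff.mpr h0
  have hcol : ∀ q, ∑ i, c i * homCoords k (p i) q = 0 := fun q => by
    simpa [Matrix.vecMul, dotProduct, homMatrix] using congrFun hc0 q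
  have hsum : ∑ i, c i = 0 := by simpa [homCoords] using hcol 0
  have hcomb : ∑ i, c i • p i = 0 := funext fun m => by
    simpa [homCoords, Finset.sum_apply] using hcol m.succ
  exact hc <| funext fun i =>
    affineIndependent_iff.mp hp Finset.univ c hsum hcomb i (Finset.mem_univ i)

end HomogeneousCoordinates

section FacetForm

variable {n : ℕ} (p : Fin (n + 2) → Fin (n + 1) → ℝ)

def facetForm : (Fin (n + 1) → ℝ) →ᵃ[ℝ] ℝ :=
  ((Matrix.detRowAlternating : (Fin (n + 2) → ℝ) [⋀^Fin (n + 2)]→ₗ[ℝ] ℝ).toMultilinearMap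
    |>.toLinearMap (homMatrix p) (Fin.last _)).toAffineMap.comp (homCoords (n + 1))

theorem facetForm_apply (z : Fin (n + 1) → ℝ) :
    facetForm p z = ((homMatrix p).updateRow (Fin.last _) (homCoords _ z)).det :=
  rfl

theorem facetForm_apply_last : facetForm p (p (Fin.last _)) = (homMatrix p).det := by
  rw [facetForm_apply]
  congr
  exact Matrix.updateRow_eq_self _ _

theorem facetForm_apply_castSucc (j : Fin (n + 1)) : facetForm p (p j.castSucc) = 0 := by
  rw [facetForm_apply]
  exact Matrix.det_zero_of_row_eq (Fin.castSucc_lt_last j).ne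
    (by rw [Matrix.updateRow_self, Matrix.updateRow_ne (Fin.castSucc_lt_last j).ne]; rfl)

theorem facetForm_eq_zero_of_mem_affineSpan {z : Fin (n + 1) → ℝ}
    (hz : z ∈ affineSpan ℝ (Set.range (p ∘ Fin.castSucc))) : facetForm p z = 0 := by
  have hle : affineSpan ℝ (facetForm p '' Set.range (p ∘ Fin.castSucc)) ≤ affineSpan ℝ {0} :=
    affineSpan_mono ℝ (by rintro _ ⟨_, ⟨j, rfl⟩, rfl⟩; exact facetForm_apply_castSucc p j)
  have := hle (AffineSubspace.map_span (facetForm p) _ ▸ AffineSubspace.mem_map_of_mem _ hz)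
  simpa using this

theorem facetForm_sub_facetForm {z z' : Fin (n + 1) → ℝ} (h : Fin.init z = Fin.init z') :
    facetForm p z - facetForm p z' =
      (homMatrix (Fin.init ∘ p ∘ Fin.castSucc)).det * (z (Fin.last n) - z' (Fin.last n)) := by
  have hdiff : z - z' = Pi.single (Fin.last n) (z (Fin.last n) - z' (Fin.last n)) := by
    ext i
    cases i using Fin.lastCases with
    | last => simp
    | cast j => simpa [Pi.single_apply, sub_eq_zero, Fin.init] using congrFun h j
  have hsmul : ∀ c : ℝ, Pi.single (Fin.last n) c = c • Pi.single (Fin.last n) 1 := fun c => by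
    rw [← Pi.single_smul, smul_eq_mul, mul_one]
  have hlin : ∀ x, (facetForm p).linear x =
      ((homMatrix p).updateRow (Fin.last _) (Fin.cons 0 x)).det := fun _ => rfl
  have hcons : (Fin.cons 0 (Pi.single (Fin.last n) 1 : Fin (n + 1) → ℝ) : Fin (n + 2) → ℝ) =
      Pi.single (Fin.last (n + 1)) 1 := by
    ext i
    cases i using Fin.cases with
    | zero => simp
    | succ j => simp [Pi.single_apply, Fin.ext_iff]
  have hminor : (homMatrix p).submatrix Fin.castSucc Fin.castSucc =
      homMatrix (Fin.init ∘ p ∘ Fin.castSucc) := by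
    ext i q
    exact homCoords_castSucc _ q
  rw [← vsub_eq_sub, ← AffineMap.linearMap_vsub, vsub_eq_sub, hdiff, hsmul, LinearMap.map_smul,
    hlin, hcons, ← Matrix.adjugate_apply, Matrix.adjugate_fin_succ_eq_det_submatrix,
    Fin.succAbove_last, hminor, smul_eq_mul, mul_comm]
  simp

theorem exists_facetForm_eq_mul {y : Fin (n + 1) → ℝ} (hy : y ∈ convexHull ℝ (Set.range p)) :
    ∃ a : ℝ, 0 ≤ a ∧ facetForm p y = a * (homMatrix p).det := by
  have hvert : facetForm p '' Set.range p ⊆ {0, (homMatrix p).det} := by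
    rintro _ ⟨_, ⟨j, rfl⟩, rfl⟩
    cases j using Fin.lastCases with
    | last => simp [facetForm_apply_last]
    | cast j => simp [facetForm_apply_castSucc]
  have : facetForm p y ∈ segment ℝ 0 (homMatrix p).det := by
    rw [← convexHull_pair]
    exact convexHull_mono hvert (AffineMap.image_convexHull (facetForm p) _ ▸ ⟨y, hy, rfl⟩)
  obtain ⟨b, a, -, ha, -, hya⟩ := this
  exact ⟨a, ha, by rw [← hya]; simp⟩

end FacetForm

section Boundary

variable {n : ℕ}

theorem projTo_self {d : ℕ} (x : Fin d → ℝ) : projTo d d x = x := by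
  ext i
  simp [projTo]

theorem projTo_succ_self (x : Fin (n + 1) → ℝ) : projTo (n + 1) n x = Fin.init x := by
  ext i
  simp [projTo, Fin.init, Nat.lt_succ_of_lt i.isLt]
  rfl

theorem lastCoord_succ (x : Fin (n + 1) → ℝ) : lastCoord (n + 1) x = x (Fin.last n) :=
  rfl

theorem mem_PB_succ_iff {P : Set (Fin (n + 1) → ℝ)} {x : Fin (n + 1) → ℝ} :
    x ∈ PB (n + 1) P ↔
      x ∈ P ∧ ∀ y ∈ P, Fin.init y = Fin.init x → y (Fin.last n) ≤ x (Fin.last n) := by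
  simp [PB, projTo_succ_self, lastCoord_succ]

theorem mem_NB_succ_iff {P : Set (Fin (n + 1) → ℝ)} {x : Fin (n + 1) → ℝ} :
    x ∈ NB (n + 1) P ↔
      x ∈ P ∧ ∀ y ∈ P, Fin.init y = Fin.init x → x (Fin.last n) ≤ y (Fin.last n) := by
  simp [NB, projTo_succ_self, lastCoord_succ]

end Boundary

section FacetSign

variable {n : ℕ} {p : Fin (n + 2) → Fin (n + 1) → ℝ}

theorem exists_last_sub_last_eq_mul
    (hY : (homMatrix (Fin.init ∘ p ∘ Fin.castSucc)).det ≠ 0) {x y : Fin (n + 1) → ℝ}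
    (hx : x ∈ convexHull ℝ (Set.range (p ∘ Fin.castSucc))) (hy : y ∈ convexHull ℝ (Set.range p))
    (hxy : Fin.init y = Fin.init x) :
    ∃ a : ℝ, 0 ≤ a ∧ y (Fin.last n) - x (Fin.last n) =
      a * ((homMatrix p).det / (homMatrix (Fin.init ∘ p ∘ Fin.castSucc)).det) := by
  obtain ⟨a, ha, hya⟩ := exists_facetForm_eq_mul p hy
  have hdiff := facetForm_sub_facetForm p hxy
  rw [hya, facetForm_eq_zero_of_mem_affineSpan p (convexHull_subset_affineSpan _ hx)] at hdiff
  refine ⟨a, ha, ?_⟩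
  field_simp
  linarith

theorem exists_mem_convexHull_init_eq_lt
    (hspan : affineSpan ℝ (Set.range (Fin.init ∘ p ∘ Fin.castSucc)) = ⊤)
    (hpos : 0 < (homMatrix p).det / (homMatrix (Fin.init ∘ p ∘ Fin.castSucc)).det)
    {x : Fin (n + 1) → ℝ}
    (hx : x ∈ intrinsicInterior ℝ (convexHull ℝ (Set.range (p ∘ Fin.castSucc)))) :
    ∃ y ∈ convexHull ℝ (Set.range p),
      Fin.init y = Fin.init x ∧ x (Fin.last n) < y (Fin.last n) := by
  -- `w` is the point of the facet's affine hull directly below or above the vertex `p (last)`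
  obtain ⟨w, hw, hinit⟩ := exists_mem_affineSpan_init_eq hspan (p (Fin.last _))
  have hheight := facetForm_sub_facetForm p hinit.symm
  rw [facetForm_apply_last, facetForm_eq_zero_of_mem_affineSpan p hw, sub_zero] at hheight
  obtain ⟨t, ht, hxt⟩ := exists_pos_add_smul_sub_mem_of_mem_intrinsicInterior hx
    (by rwa [affineSpan_convexHull])
  set s := t / (1 + t)
  refine ⟨x + s • (p (Fin.last _) - w), ?_, ?_, ?_⟩
  · have hcomb : x + s • (p (Fin.last _) - w) =
        s • p (Fin.last _) + (1 - s) • (x + t • (x - w)) := by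
      ext i
      simp only [s, Pi.add_apply, Pi.smul_apply, Pi.sub_apply, smul_eq_mul]
      field_simp
      ring
    rw [hcomb]
    exact convex_convexHull ℝ _ (subset_convexHull ℝ _ (Set.mem_range_self _))
      (convexHull_mono (Set.range_comp_subset_range _ _) hxt) (by positivity)
      (by rw [sub_nonneg, div_le_one (by positivity)]; linarith) (by ring)
  · ext j
    have hj : w j.castSucc = p (Fin.last _) j.castSucc := congrFun hinit j
    simp [Fin.init, hj]
  · have hY : (homMatrix (Fin.init ∘ p ∘ Fin.castSucc)).det ≠ 0 := by
      rintro h0; simp [h0] at hpos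
    have hw_lt : 0 < p (Fin.last _) (Fin.last n) - w (Fin.last n) := by
      rwa [hheight, mul_div_cancel_left₀ _ hY] at hpos
    have hs : 0 < s := by positivity
    simp only [Pi.add_apply, Pi.smul_apply, Pi.sub_apply, smul_eq_mul]
    nlinarith

theorem facetSign_convexHull_eq_neg_sign_det_div (hp : AffineIndependent ℝ p)
    (hspan : affineSpan ℝ (Set.range (Fin.init ∘ p ∘ Fin.castSucc)) = ⊤) :
    facetSign (n + 1) (convexHull ℝ (Set.range p))
        (convexHull ℝ (Set.range (p ∘ Fin.castSucc))) =
      -Real.sign ((homMatrix p).det / (homMatrix (Fin.init ∘ p ∘ Fin.castSucc)).det) := by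
  have hY := det_homMatrix_ne_zero (affineIndependent_of_affineSpan_eq_top (by simp) hspan)
  have hFP : convexHull ℝ (Set.range (p ∘ Fin.castSucc)) ⊆ convexHull ℝ (Set.range p) :=
    convexHull_mono (Set.range_comp_subset_range _ _)
  obtain ⟨x₀, hx₀⟩ :=
    Set.Nonempty.intrinsicInterior (convex_convexHull ℝ (Set.range (p ∘ Fin.castSucc)))
      ⟨_, subset_convexHull ℝ _ (Set.mem_range_self (0 : Fin (n + 1)))⟩
  have hx₀F := intrinsicInterior_subset hx₀
  rcases (div_ne_zero (det_homMatrix_ne_zero hp) hY).lt_or_gt with hneg | hpos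
  · have hPB : x₀ ∈ PB (n + 1) (convexHull ℝ (Set.range p)) :=
      mem_PB_succ_iff.mpr ⟨hFP hx₀F, fun y hy hyx => by
        obtain ⟨a, ha, h⟩ := exists_last_sub_last_eq_mul hY hx₀F hy hyx
        nlinarith [mul_nonpos_of_nonneg_of_nonpos ha hneg.le]⟩
    rw [facetSign, if_pos ⟨x₀, hx₀, hPB⟩, Real.sign_of_neg hneg, neg_neg]
  · have hNB : x₀ ∈ NB (n + 1) (convexHull ℝ (Set.range p)) :=
      mem_NB_succ_iff.mpr ⟨hFP hx₀F, fun y hy hyx => by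
        obtain ⟨a, ha, h⟩ := exists_last_sub_last_eq_mul hY hx₀F hy hyx
        nlinarith [mul_nonneg ha hpos.le]⟩
    have hnotPB : ¬∃ x ∈ intrinsicInterior ℝ (convexHull ℝ (Set.range (p ∘ Fin.castSucc))),
        x ∈ PB (n + 1) (convexHull ℝ (Set.range p)) := by
      rintro ⟨x, hx, hxPB⟩
      obtain ⟨y, hy, hyx, hlt⟩ := exists_mem_convexHull_init_eq_lt hspan hpos hx
      exact ((mem_PB_succ_iff.mp hxPB).2 y hy hyx).not_gt hlt
    rw [facetSign, if_neg hnotPB, if_pos ⟨x₀, hx₀, hNB⟩, Real.sign_of_pos hpos]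

end FacetSign

section Rows

variable {d : ℕ} (v : Fin (d + 1) → Fin d → ℝ) (σ : Equiv.Perm (Fin d))

theorem Xmat_eq_homMatrix (k : ℕ) :
    Xmat d v σ k = homMatrix fun p : Fin (k + 1) => projTo d k (rowVert d v σ k p) := by
  ext p q
  simp only [Xmat, homMatrix, Matrix.of_apply, homCoords_apply]
  split_ifs with hq
  · rfl
  · simp [coordN, projTo, show (q : ℕ) - 1 < k by omega]

theorem Ymat_succ_eq_homMatrix (k : ℕ) :
    Ymat d v σ (k + 1) =
      homMatrix fun p : Fin (k + 1) => projTo d k (rowVert d v σ (k + 1) p) := by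
  ext p q
  simp only [Ymat, homMatrix, Matrix.of_apply, homCoords_apply]
  split_ifs with hq
  · rfl
  · simp [coordN, projTo, show (q : ℕ) - 1 < k by omega]

@[simp]
theorem Equiv.Perm.viaFintypeEmbedding_castSuccEmb_castSucc (j : Fin d) :
    σ.viaFintypeEmbedding Fin.castSuccEmb j.castSucc = (σ j).castSucc :=
  σ.viaFintypeEmbedding_apply_image _ j

@[simp]
theorem Equiv.Perm.viaFintypeEmbedding_castSuccEmb_last :
    σ.viaFintypeEmbedding Fin.castSuccEmb (Fin.last d) = Fin.last d :=
  σ.viaFintypeEmbedding_apply_notMem_range _ (by simp)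

theorem rowVert_self (p : Fin (d + 1)) :
    rowVert d v σ d p = v (σ.viaFintypeEmbedding Fin.castSuccEmb p) := by
  cases p using Fin.lastCases <;> simp [rowVert]

end Rows

section Simplex

variable {n : ℕ} (v : Fin (n + 2) → Fin (n + 1) → ℝ) (σ : Equiv.Perm (Fin (n + 1)))

theorem rowVert_pred (p : Fin (n + 1)) :
    rowVert (n + 1) v σ n p = v ((σ.viaFintypeEmbedding Fin.castSuccEmb *
      Equiv.swap (Fin.last n).castSucc (Fin.last (n + 1))) p.castSucc) := by
  cases p using Fin.lastCases with
  | last => simp [rowVert]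
  | cast j =>
    rw [Equiv.Perm.mul_apply, Equiv.swap_apply_of_ne_of_ne
      (Fin.castSucc_injective _ |>.ne (Fin.castSucc_lt_last j).ne) (Fin.castSucc_lt_last _).ne]
    simp [rowVert]
    rfl

theorem image_ne_eq_range_comp_castSucc (ρ : Equiv.Perm (Fin (n + 2))) :
    v '' {j | j ≠ ρ (Fin.last _)} = Set.range (v ∘ ρ ∘ Fin.castSucc) := by
  ext x
  constructor
  · rintro ⟨j, hj, rfl⟩
    have hj' : ρ.symm j ≠ Fin.last _ := fun h => hj (by rw [← h, Equiv.apply_symm_apply])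
    obtain ⟨i, hi⟩ := Fin.exists_castSucc_eq.mpr hj'
    exact ⟨i, by simp [hi]⟩
  · rintro ⟨i, rfl⟩
    exact ⟨ρ i.castSucc, ρ.injective.ne (Fin.castSucc_lt_last i).ne, rfl⟩

theorem facetSign_eq_neg_sign_det_div_of_perm (hGP : SimplexGenPos (n + 1) v)
    (ρ : Equiv.Perm (Fin (n + 2))) :
    facetSign (n + 1) (convexHull ℝ (Set.range v))
        (convexHull ℝ (v '' {j | j ≠ ρ (Fin.last _)})) =
      -Real.sign
        ((homMatrix (v ∘ ρ)).det / (homMatrix (Fin.init ∘ v ∘ ρ ∘ Fin.castSucc)).det) := by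
  have hspan := hGP.2 n n.lt_succ_self (Finset.univ.erase (ρ (Fin.last _))) (by simp)
  have hU : ((Finset.univ.erase (ρ (Fin.last _)) : Finset _) : Set (Fin (n + 2))) =
      {j | j ≠ ρ (Fin.last _)} := by
    ext; simp
  rw [hU, image_ne_eq_range_comp_castSucc, ← Set.range_comp, funext projTo_succ_self] at hspan
  rw [image_ne_eq_range_comp_castSucc, ← ρ.surjective.range_comp v]
  exact facetSign_convexHull_eq_neg_sign_det_div (hGP.1.comp_embedding ρ.toEmbedding) hspan

theorem facetSign_opposite_last_eq (hGP : SimplexGenPos (n + 1) v) :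
    facetSign (n + 1) (convexHull ℝ (Set.range v))
        (convexHull ℝ (v '' {j | j ≠ Fin.last (n + 1)})) =
      -Real.sign ((Xmat (n + 1) v σ (n + 1)).det / (Ymat (n + 1) v σ (n + 1)).det) := by
  set τ := σ.viaFintypeEmbedding Fin.castSuccEmb
  have hX : Xmat (n + 1) v σ (n + 1) = homMatrix (v ∘ τ) := by
    rw [Xmat_eq_homMatrix]
    congr 1
    ext1 p
    rw [projTo_self, rowVert_self]
    rfl
  have hY : Ymat (n + 1) v σ (n + 1) = homMatrix (Fin.init ∘ v ∘ τ ∘ Fin.castSucc) := by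
    rw [Ymat_succ_eq_homMatrix]
    congr 1
    ext1 p
    rw [projTo_succ_self, ← Fin.val_castSucc, rowVert_self]
    rfl
  have := facetSign_eq_neg_sign_det_div_of_perm v hGP τ
  rwa [Equiv.Perm.viaFintypeEmbedding_castSuccEmb_last, ← hX, ← hY] at this

theorem facetSign_opposite_castSucc_eq (hGP : SimplexGenPos (n + 1) v) :
    facetSign (n + 1) (convexHull ℝ (Set.range v))
        (convexHull ℝ (v '' {j | j ≠ (σ (Fin.last n)).castSucc})) =
      Real.sign ((Xmat (n + 1) v σ (n + 1)).det / (Xmat (n + 1) v σ n).det) := by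
  set τ := σ.viaFintypeEmbedding Fin.castSuccEmb
  -- `v ∘ ρ` lists the vertices of the facet, ending with `v (last)`, and then the opposite vertex
  set ρ := τ * Equiv.swap (Fin.last n).castSucc (Fin.last (n + 1))
  have hlast : ρ (Fin.last _) = (σ (Fin.last n)).castSucc := by
    simp [ρ, τ]
  have hX : homMatrix (v ∘ ρ) = (Xmat (n + 1) v σ (n + 1)).submatrix
      (Equiv.swap (Fin.last n).castSucc (Fin.last (n + 1))) id := by
    rw [Xmat_eq_homMatrix]
    ext p q
    simp [homMatrix, projTo_self, rowVert_self, ρ, τ]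
  have hY : Xmat (n + 1) v σ n = homMatrix (Fin.init ∘ v ∘ ρ ∘ Fin.castSucc) := by
    rw [Xmat_eq_homMatrix]
    congr 1
    ext1 p
    rw [projTo_succ_self, rowVert_pred]
    rfl
  have := facetSign_eq_neg_sign_det_div_of_perm v hGP ρ
  rwa [hlast, hX, ← hY, Matrix.det_permute, Equiv.Perm.sign_swap (Fin.castSucc_lt_last _).ne,
    Units.val_neg, Units.val_one, Int.cast_neg, Int.cast_one, neg_one_mul, neg_div,
    Real.sign_neg, neg_neg] at this

end Simplex

theorem facetSign_eq_sign_det_ratio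
    (d : ℕ) (hd : 1 ≤ d) (v : Fin (d + 1) → Fin d → ℝ) (hGP : SimplexGenPos d v) :
    (∀ i : Fin (d + 1), (i : ℕ) < d → ∀ σ : Equiv.Perm (Fin d),
        Fin.castSucc (σ ⟨d - 1, by omega⟩) = i →
        facetSign d (convexHull ℝ (Set.range v))
            (convexHull ℝ (v '' {j : Fin (d + 1) | j ≠ i}))
          = Real.sign ((Xmat d v σ d).det / (Xmat d v σ (d - 1)).det))
      ∧ (∀ σ : Equiv.Perm (Fin d),
          facetSign d (convexHull ℝ (Set.range v))
              (convexHull ℝ (v '' {j : Fin (d + 1) | j ≠ Fin.last d}))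
            = -Real.sign ((Xmat d v σ d).det / (Ymat d v σ d).det)
          ∧ facetSign d (convexHull ℝ (Set.range v))
              (convexHull ℝ (v '' {j : Fin (d + 1) | j ≠ Fin.last d}))
            = -Real.sign (zc d v σ d)) := by
  obtain ⟨n, rfl⟩ : ∃ n, d = n + 1 := ⟨d - 1, by omega⟩
  refine ⟨fun i _ σ hσ => ?_, fun σ =>
    ⟨facetSign_opposite_last_eq v σ hGP, facetSign_opposite_last_eq v σ hGP⟩⟩
  subst hσ
  exact facetSign_opposite_castSucc_eq v σ hGP
end

section
/- Let P be a lattice-face d-simplex with vertices v_1,…,v_{d+1}. Then for every permutation σ ∈ S_d, every 1 ≤ k ≤ d and every 0 ≤ j ≤ k−1, the ratio m(σ,k;j) / det Y(σ,k) is an integer. -/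
open MeasureTheory Polynomial

/-! The cofactors `c_0, …, c_k` of `X(σ,k)` along its last row define the linear form
`r ↦ Σ_q c_q r_q`, which vanishes on the span of the other rows, hence on `(1, w_1, …, w_k)`
for every `w` in the affine span of the face `v_{σ(1)}, …, v_{σ(k)}`. The lattice-face property
gives, over every `z ∈ ℤ^{k-1}`, a lattice point `w` of that affine span, so
`c_0 + Σ_{i<k} c_i z_i + c_k w_k = 0` with `w_k ∈ ℤ`; comparing `z = 0` with `z = e_i` shows
that `c_i / c_k` is an integer. Finally `c_k = det Y(σ,k)` and `c_{j+1} = ± m(σ,k;j)`. -/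

open Matrix

theorem Matrix.vecMul_adjugate_apply_eq_zero_of_mem_span {n R : Type*} [Fintype n]
    [DecidableEq n] [CommRing R] {A : Matrix n n R} {j : n} {r : n → R}
    (hr : r ∈ Submodule.span R (A '' {j}ᶜ)) : (r ᵥ* A.adjugate) j = 0 := by
  let f : (n → R) →ₗ[R] R := LinearMap.proj j ∘ₗ A.adjugate.vecMulLinear
  suffices Submodule.span R (A '' {j}ᶜ) ≤ LinearMap.ker f from this hr
  rw [Submodule.span_le]
  rintro _ ⟨i, hij, rfl⟩
  change (A i ᵥ* A.adjugate) j = 0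
  rw [← mul_apply_eq_vecMul, mul_adjugate, smul_apply, one_apply_ne hij, smul_zero]

theorem exists_int_eq_div_last_of_forall_int {K : Type*} [Field K] {m : ℕ}
    (a : Fin (m + 1) → K) (b : K)
    (h : ∀ z : Fin m → ℤ, ∃ n : ℤ, b + ∑ i, (z i : K) * a i.castSucc + n * a (Fin.last m) = 0)
    (i : Fin (m + 1)) : ∃ n : ℤ, a i / a (Fin.last m) = n := by
  by_cases ha : a (Fin.last m) = 0
  · exact ⟨0, by simp [ha]⟩
  induction i using Fin.lastCases with
  | last => exact ⟨1, by simp [ha]⟩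
  | cast i =>
    obtain ⟨n₀, h₀⟩ := h 0
    obtain ⟨n₁, h₁⟩ := h (Pi.single i 1)
    refine ⟨n₀ - n₁, ?_⟩
    rw [div_eq_iff ha]
    simp only [Pi.single_apply, Int.cast_ite, Int.cast_one, Int.cast_zero, ite_mul, one_mul,
      zero_mul, Finset.sum_ite_eq', Finset.mem_univ, if_true, Pi.zero_apply,
      Finset.sum_const_zero] at h₀ h₁
    push_cast
    linear_combination h₁ - h₀

noncomputable def homogeneousRow (d k : ℕ) : (Fin d → ℝ) →ᵃ[ℝ] (Fin (k + 1) → ℝ) where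
  toFun x q := if (q : ℕ) = 0 then 1 else coordN x ((q : ℕ) - 1)
  linear :=
    { toFun := fun x q => if (q : ℕ) = 0 then 0 else coordN x ((q : ℕ) - 1)
      map_add' := fun x y => by ext q; simp only [Pi.add_apply, coordN]; split_ifs <;> simp
      map_smul' := fun c x => by
        ext q; simp only [Pi.smul_apply, RingHom.id_apply, coordN]; split_ifs <;> simp }
  map_vadd' x y := by
    ext q
    simp only [vadd_eq_add, Pi.add_apply, LinearMap.coe_mk, AddHom.coe_mk, coordN]
    split_ifs <;> simp

section SimplexFace

variable {d : ℕ} (v : Fin (d + 1) → Fin d → ℝ) (σ : Equiv.Perm (Fin d)) {k : ℕ} (hkd : k ≤ d)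

def faceEmb : Fin k ↪ Fin (d + 1) :=
  (Fin.castLEEmb hkd).trans (σ.toEmbedding.trans Fin.castSuccEmb)

theorem Xmat_castSucc (p : Fin k) :
    Xmat d v σ k p.castSucc = homogeneousRow d k (v (faceEmb σ hkd p)) := by
  have hvert : rowVert d v σ k p = v (faceEmb σ hkd p) :=
    dif_pos ⟨p.isLt, p.isLt.trans_le hkd⟩
  rw [← hvert]
  funext q
  rfl

theorem homogeneousRow_mem_span_Xmat {w : Fin d → ℝ}
    (hw : w ∈ affineSpan ℝ (v '' (Finset.univ.map (faceEmb σ hkd) : Set (Fin (d + 1))))) :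
    homogeneousRow d k w ∈ Submodule.span ℝ (Xmat d v σ k '' {Fin.last k}ᶜ) := by
  have hrow : homogeneousRow d k w ∈ affineSpan ℝ
      (homogeneousRow d k '' (v '' (Finset.univ.map (faceEmb σ hkd) : Set (Fin (d + 1))))) := by
    rw [← AffineSubspace.map_span]
    exact ⟨w, hw, rfl⟩
  refine Submodule.span_mono ?_ (affineSpan_subset_span hrow)
  rintro _ ⟨_, ⟨_, hi, rfl⟩, rfl⟩
  obtain ⟨p, -, rfl⟩ := Finset.mem_map.1 hi
  exact ⟨p.castSucc, Fin.castSucc_ne_last p, Xmat_castSucc v σ hkd p⟩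

theorem adjugate_Xmat_last_last :
    (Xmat d v σ k).adjugate (Fin.last k) (Fin.last k) = (Ymat d v σ k).det := by
  rw [adjugate_fin_succ_eq_det_submatrix, Fin.succAbove_last, Fin.val_last,
    Even.neg_one_pow ⟨k, rfl⟩, one_mul]
  rfl

theorem minorM_eq_adjugate_Xmat (j : Fin k) :
    minorM d v σ k j = (-1) ^ (k + j + 1) * (Xmat d v σ k).adjugate j.succ (Fin.last k) := by
  rw [adjugate_fin_succ_eq_det_submatrix, Fin.succAbove_last, ← mul_assoc, ← pow_add,
    Even.neg_one_pow ⟨k + j + 1, by simp; ring⟩, one_mul]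
  rfl

end SimplexFace

theorem SimplexLatticeFace.exists_lattice_point_proj_eq {d : ℕ}
    {v : Fin (d + 1) → Fin d → ℝ} (hLF : SimplexLatticeFace d v) (σ : Equiv.Perm (Fin d))
    {m : ℕ} (hmd : m + 1 ≤ d) (z : Fin m → ℤ) :
    ∃ w ∈ affineSpan ℝ (v '' (Finset.univ.map (faceEmb σ hmd) : Set (Fin (d + 1)))),
      projTo d m w = (fun i => (z i : ℝ)) ∧ ∃ n : ℤ, w ⟨m, hmd⟩ = n := by
  have hz : (fun i => (z i : ℝ)) ∈ latticePts m := fun i => ⟨z i, rfl⟩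
  rw [← hLF.2 m hmd (Finset.univ.map (faceEmb σ hmd)) (by simp)] at hz
  obtain ⟨w, ⟨hw, hwℤ⟩, hwz⟩ := hz
  exact ⟨w, hw, hwz, hwℤ _⟩

theorem minor_ratio_is_integer_general
    (d : ℕ) (v : Fin (d + 1) → Fin d → ℝ)
    (hLF : SimplexLatticeFace d v) (σ : Equiv.Perm (Fin d)) (k j : ℕ)
    (hk1 : 1 ≤ k) (hkd : k ≤ d) (hj : j ≤ k - 1) :
    ∃ n : ℤ, minorM d v σ k j / (Ymat d v σ k).det = (n : ℝ) := by
  obtain ⟨m, rfl⟩ : ∃ m, k = m + 1 := ⟨k - 1, by omega⟩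
  set c : Fin (m + 2) → ℝ := fun q => (Xmat d v σ (m + 1)).adjugate q (Fin.last (m + 1))
  have hc : ∀ z : Fin m → ℤ, ∃ n : ℤ,
      c 0 + ∑ i, (z i : ℝ) * c i.castSucc.succ + n * c (Fin.last m).succ = 0 := by
    intro z
    obtain ⟨w, hw, hwz, n, hn⟩ := hLF.exists_lattice_point_proj_eq σ hkd z
    have hrow :=
      vecMul_adjugate_apply_eq_zero_of_mem_span (homogeneousRow_mem_span_Xmat v σ hkd hw)
    rw [vecMul, dotProduct, Fin.sum_univ_succ, Fin.sum_univ_castSucc] at hrow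
    have h0 : homogeneousRow d (m + 1) w 0 = 1 := rfl
    have hz : ∀ i : Fin m, homogeneousRow d (m + 1) w i.castSucc.succ = z i :=
      fun i => congrFun hwz i
    have hlast : homogeneousRow d (m + 1) w (Fin.last m).succ = n := by
      simpa [homogeneousRow, coordN, show m < d from hkd] using hn
    simp only [h0, hz, hlast] at hrow
    exact ⟨n, by linear_combination hrow⟩
  obtain ⟨n, hn⟩ :=
    exists_int_eq_div_last_of_forall_int (fun i => c i.succ) (c 0) hc ⟨j, by omega⟩
  simp only [c, Fin.succ_last] at hn
  refine ⟨(-1) ^ (m + j) * n, ?_⟩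
  rw [minorM_eq_adjugate_Xmat v σ ⟨j, by omega⟩, ← adjugate_Xmat_last_last, mul_div_assoc,
    hn]
  push_cast
  ring

theorem minor_ratio_is_integer
    (d : ℕ) (hd : 1 ≤ d) (v : Fin (d + 1) → Fin d → ℝ)
    (hLF : SimplexLatticeFace d v) (σ : Equiv.Perm (Fin d)) (k j : ℕ)
    (hk1 : 1 ≤ k) (hkd : k ≤ d) (hj : j ≤ k - 1) :
    ∃ n : ℤ, minorM d v σ k j / (Ymat d v σ k).det = (n : ℝ) :=
  minor_ratio_is_integer_general d v hLF σ k j hk1 hkd hj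
end

section
/- Let P be a lattice-face d-simplex with vertices v_1,…,v_{d+1} and let σ ∈ S_d. Then there exists a lattice-preserving affine transformation T_σ : ℝ^d → ℝ^d, of the form T_σ(x) = α_σ + x M_σ with α_σ ∈ ℤ^d and M_σ an upper triangular d×d integer matrix with all diagonal entries equal to 1, such that for every x ∈ ℝ^d and every 1 ≤ k ≤ d, the k-th coordinate of T_σ(x) equals det X̃(σ,k;x) / det Y(σ,k). In particular T_σ is invertible and maps ℤ^d bijectively onto ℤ^d. -/
open MeasureTheory Polynomial

/-!
For each `k`, expanding `det X̃(σ,k;x)` along its last row shows that it is an affine function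
`c + a₁x₁ + ⋯ + a_k x_k` of `x` with `a_k = det Y(σ,k)`. It vanishes at `v_{σ(1)}, …, v_{σ(k)}`
(two equal rows), hence on their affine span `A`. The lattice-face property lifts every
`y ∈ ℤ^{k-1}` to a lattice point of `A` with first coordinates `y`; evaluating there at `y = 0`
and at the unit vectors shows that `c, a₁, …, a_{k-1}` are integer multiples of `a_k`. The same
argument, run on the affine function of `x₁, …, x_{k-1}` given by a kernel vector of `Y(σ,k)`,
forces that vector to vanish, so `det Y(σ,k) ≠ 0`. Dividing by `a_k` produces the `k`-th column
of an upper unitriangular integer matrix `M`, and `x ↦ α + xM` is invertible with inverse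
`y ↦ -αM⁻¹ + yM⁻¹` of the same integral form.
-/

section IntAffine

open Matrix

variable {ι : Type*} [Fintype ι]

def intAffine (α : ι → ℤ) (M : Matrix ι ι ℤ) (x : ι → ℝ) : ι → ℝ :=
  fun k => (α k : ℝ) + ∑ i, x i * (M i k : ℝ)

lemma intAffine_eq_vecMul (α : ι → ℤ) (M : Matrix ι ι ℤ) (x : ι → ℝ) :
    intAffine α M x = (Int.castRingHom ℝ ∘ α) + x ᵥ* M.map (Int.castRingHom ℝ) := rfl

lemma intAffine_intAffine (α β : ι → ℤ) (M N : Matrix ι ι ℤ) (x : ι → ℝ) :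
    intAffine β N (intAffine α M x) = intAffine (β + α ᵥ* N) (M * N) x := by
  simp only [intAffine_eq_vecMul, add_vecMul, vecMul_vecMul, Matrix.map_mul]
  ext k
  simp only [Pi.add_apply, Function.comp_apply, map_add, RingHom.map_vecMul]
  ring

lemma intAffine_intCast (α : ι → ℤ) (M : Matrix ι ι ℤ) (z : ι → ℤ) :
    intAffine α M (fun i => (z i : ℝ)) = fun k => ((α + z ᵥ* M) k : ℝ) := by
  ext k
  simp [intAffine, vecMul, dotProduct]

variable [DecidableEq ι]

lemma intAffine_zero_one (x : ι → ℝ) : intAffine 0 (1 : Matrix ι ι ℤ) x = x := by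
  ext k
  simp [intAffine_eq_vecMul]

lemma leftInverse_intAffine {M N : Matrix ι ι ℤ} (hMN : M * N = 1) (α : ι → ℤ) :
    Function.LeftInverse (intAffine (-(α ᵥ* N)) N) (intAffine α M) := by
  intro x
  rw [intAffine_intAffine, hMN, neg_add_cancel, intAffine_zero_one]

lemma rightInverse_intAffine {M N : Matrix ι ι ℤ} (hNM : N * M = 1) (α : ι → ℤ) :
    Function.RightInverse (intAffine (-(α ᵥ* N)) N) (intAffine α M) := by
  intro y
  rw [intAffine_intAffine, hNM, neg_vecMul, vecMul_vecMul, hNM, vecMul_one, add_neg_cancel,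
    intAffine_zero_one]

lemma bijective_intAffine {M : Matrix ι ι ℤ} (hM : IsUnit M.det) (α : ι → ℤ) :
    Function.Bijective (intAffine α M) :=
  Function.bijective_iff_has_inverse.mpr ⟨_, leftInverse_intAffine (mul_nonsing_inv M hM) α,
    rightInverse_intAffine (nonsing_inv_mul M hM) α⟩

end IntAffine

lemma mapsTo_intAffine_latticePts {d : ℕ} (α : Fin d → ℤ) (M : Matrix (Fin d) (Fin d) ℤ) :
    Set.MapsTo (intAffine α M) (latticePts d) (latticePts d) := by
  intro x hx
  choose z hz using hx
  rw [show x = fun i => (z i : ℝ) from funext hz, intAffine_intCast]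
  exact fun k => ⟨_, rfl⟩

lemma bijOn_intAffine_latticePts {d : ℕ} {M : Matrix (Fin d) (Fin d) ℤ} (hM : IsUnit M.det)
    (α : Fin d → ℤ) : Set.BijOn (intAffine α M) (latticePts d) (latticePts d) :=
  Set.InvOn.bijOn ⟨(leftInverse_intAffine (Matrix.mul_nonsing_inv M hM) α).leftInvOn _,
      (rightInverse_intAffine (Matrix.nonsing_inv_mul M hM) α).rightInvOn _⟩
    (mapsTo_intAffine_latticePts α M) (mapsTo_intAffine_latticePts _ _)

theorem exists_int_multiples_of_forall_lift {ι : Type*} [Fintype ι] [LinearOrder ι] (k : ι)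
    (c : ℝ) (a : ι → ℝ) (ha : ∀ i, k < i → a i = 0)
    (h : ∀ y : ι → ℤ, ∃ z : ι → ℤ, (∀ i < k, z i = y i) ∧ c + ∑ i, (z i : ℝ) * a i = 0) :
    ∃ (α : ℤ) (m : ι → ℤ),
      (∀ i, k < i → m i = 0) ∧ m k = 1 ∧ c = α * a k ∧ ∀ i, a i = m i * a k := by
  obtain ⟨z₀, hz₀, h₀⟩ := h 0
  have hc : c + z₀ k * a k = 0 := by
    rwa [Finset.sum_eq_single k (fun i _ hik => ?_) (by simp)] at h₀
    rcases lt_or_gt_of_ne hik with hlt | hgt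
    · simp [hz₀ i hlt]
    · simp [ha i hgt]
  have hlt : ∀ i < k, ∃ n : ℤ, a i = n * a k := by
    intro i hi
    obtain ⟨z, hz, h₁⟩ := h (Pi.single i 1)
    rw [Fintype.sum_eq_add i k hi.ne fun j ⟨hji, hjk⟩ => ?_, hz i hi, Pi.single_eq_same] at h₁
    · exact ⟨z₀ k - z k, by push_cast at h₁ ⊢; linarith⟩
    rcases lt_or_gt_of_ne hjk with hlt | hgt
    · simp [hz j hlt, hji]
    · simp [ha j hgt]
  choose! n hn using hlt
  refine ⟨-z₀ k, fun i => if i < k then n i else if i = k then 1 else 0,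
    fun i hki => by simp [hki.not_gt, hki.ne'], by simp, by push_cast; linarith, fun i => ?_⟩
  rcases lt_trichotomy i k with hik | rfl | hki
  · simp [hik, hn i hik]
  · simp
  · simp [hki.not_gt, hki.ne', ha i hki]

lemma coordN_of_lt {d : ℕ} (x : Fin d → ℝ) {j : ℕ} (hj : j < d) : coordN x j = x ⟨j, hj⟩ :=
  dif_pos hj

lemma coordN_of_le {d : ℕ} (x : Fin d → ℝ) {j : ℕ} (hj : d ≤ j) : coordN x j = 0 :=
  dif_neg (not_lt.mpr hj)

lemma sum_mul_eq_sum_range_coordN {m N : ℕ} (hN : m ≤ N) (x : Fin m → ℝ) (f : ℕ → ℝ) :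
    ∑ i : Fin m, x i * f i = ∑ t ∈ Finset.range N, coordN x t * f t := by
  rw [← Finset.sum_subset (Finset.range_mono hN) fun t _ ht => by
    rw [coordN_of_le x (by simpa using ht), zero_mul]]
  rw [← Fin.sum_univ_eq_sum_range (fun t => coordN x t * f t)]
  simp [coordN_of_lt]

lemma sum_coordN_mul_comm {n d : ℕ} (b : Fin n → ℝ) (x : Fin d → ℝ) :
    ∑ q : Fin n, coordN x q * b q = ∑ i : Fin d, x i * coordN b i := by
  rw [sum_mul_eq_sum_range_coordN (N := n + d) (by omega) x,
    Finset.sum_congr rfl fun q _ => mul_comm _ _,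
    sum_mul_eq_sum_range_coordN (N := n + d) (by omega) b]
  exact Finset.sum_congr rfl fun t _ => mul_comm _ _

section Determinants

open Matrix

variable {d : ℕ} (v : Fin (d + 1) → Fin d → ℝ) (σ : Equiv.Perm (Fin d))

lemma rowVert_of_lt {n : ℕ} (p : Fin d) (hp : (p : ℕ) < n) :
    rowVert d v σ n p = v (σ p).castSucc := by
  simp [rowVert, hp]

def xtilCofactor (n : ℕ) (j : Fin (n + 1)) : ℝ :=
  (-1) ^ (n + j : ℕ) * ((Xtil d v σ n 0).submatrix Fin.castSucc j.succAbove).det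

lemma xtilCofactor_last (n : ℕ) : xtilCofactor v σ n (Fin.last n) = (Ymat d v σ n).det := by
  have hY : (Xtil d v σ n 0).submatrix Fin.castSucc (Fin.last n).succAbove = Ymat d v σ n := by
    ext p q
    simp only [Xtil, Ymat, submatrix_apply, of_apply, Fin.succAbove_last, Fin.val_castSucc,
      p.isLt, if_true]
  rw [xtilCofactor, hY, Fin.val_last, ← two_mul, pow_mul, neg_one_sq, one_pow, one_mul]

lemma det_Xtil (n : ℕ) (x : Fin d → ℝ) :
    (Xtil d v σ n x).det
      = xtilCofactor v σ n 0 + ∑ q : Fin n, coordN x q * xtilCofactor v σ n q.succ := by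
  have hminor : ∀ j : Fin n → Fin (n + 1), (Xtil d v σ n x).submatrix Fin.castSucc j
      = (Xtil d v σ n 0).submatrix Fin.castSucc j := by
    intro j
    ext p q
    simp [Xtil]
  have hlast0 : Xtil d v σ n x (Fin.last n) 0 = 1 := by simp [Xtil]
  have hlast : ∀ q : Fin n, Xtil d v σ n x (Fin.last n) q.succ = coordN x q := by
    simp [Xtil]
  rw [det_succ_row _ (Fin.last n), Fin.sum_univ_succ, Fin.succAbove_last, hminor, hlast0]
  simp only [hminor, hlast, xtilCofactor, Fin.val_last]
  congr 1
  · ring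
  · exact Finset.sum_congr rfl fun q _ => by ring

lemma det_Xtil_vertex (n : ℕ) (p : Fin d) (hp : (p : ℕ) < n) :
    (Xtil d v σ n (v (σ p).castSucc)).det = 0 := by
  refine det_zero_of_row_eq (i := Fin.castSucc ⟨p, hp⟩) (j := Fin.last n)
    (Fin.castSucc_lt_last _).ne ?_
  ext q
  simp [Xtil, hp, rowVert_of_lt v σ p hp]

end Determinants

section LatticeFace

open Matrix

variable {d : ℕ} {v : Fin (d + 1) → Fin d → ℝ} (σ : Equiv.Perm (Fin d))

def faceIndices (k : Fin d) : Finset (Fin (d + 1)) :=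
  (Finset.Iic k).map ⟨fun p => (σ p).castSucc, (Fin.castSucc_injective d).comp σ.injective⟩

lemma card_faceIndices (k : Fin d) : (faceIndices σ k).card = k + 1 := by
  simp [faceIndices]

theorem SimplexLatticeFace.exists_int_multiples (hLF : SimplexLatticeFace d v) (k : Fin d)
    (c : ℝ) (a : Fin d → ℝ) (ha : ∀ i, k < i → a i = 0)
    (hv : ∀ p ≤ k, c + ∑ i, v (σ p).castSucc i * a i = 0) :
    ∃ (α : ℤ) (m : Fin d → ℤ),
      (∀ i, k < i → m i = 0) ∧ m k = 1 ∧ c = α * a k ∧ ∀ i, a i = m i * a k := by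
  refine exists_int_multiples_of_forall_lift k c a ha fun y => ?_
  let ℓ : (Fin d → ℝ) →ᵃ[ℝ] ℝ :=
    AffineMap.const ℝ _ c + (Fintype.linearCombination ℝ a).toAffineMap
  have hℓ : ∀ x, ℓ x = c + ∑ i, x i * a i := by
    simp [ℓ, Fintype.linearCombination_apply]
  have hy : (fun j : Fin k => (y (Fin.castLE k.isLt.le j) : ℝ)) ∈ latticePts k :=
    fun j => ⟨_, rfl⟩
  rw [← hLF.2 k k.isLt (faceIndices σ k) (card_faceIndices σ k)] at hy
  obtain ⟨w, ⟨hw, hwZ⟩, hwy⟩ := hy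
  choose z hz using hwZ
  refine ⟨z, fun i hi => ?_, ?_⟩
  · have := congrFun hwy ⟨i, hi⟩
    simp only [projTo, i.isLt, dite_true, hz] at this
    exact_mod_cast this
  · have hvert : Set.EqOn ℓ (AffineMap.const ℝ _ 0)
        (v '' (faceIndices σ k : Set (Fin (d + 1)))) := by
      rintro _ ⟨_, hq, rfl⟩
      obtain ⟨p, hp, rfl⟩ := Finset.mem_map.mp hq
      simpa [hℓ] using hv p (Finset.mem_Iic.mp hp)
    simpa only [hℓ, hz, AffineMap.const_apply] using AffineMap.eqOn_affineSpan hvert hw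

theorem SimplexLatticeFace.det_Ymat_ne_zero (hLF : SimplexLatticeFace d v) (k : Fin d) :
    (Ymat d v σ (k + 1)).det ≠ 0 := by
  intro h
  obtain ⟨μ, hμ, hYμ⟩ := exists_mulVec_eq_zero_iff.mpr h
  have hv : ∀ p ≤ k,
      μ 0 + ∑ i, v (σ p).castSucc i * coordN (fun q : Fin k => μ q.succ) i = 0 := by
    intro p hp
    have hpk : (p : ℕ) < k + 1 := Nat.lt_succ_of_le hp
    have := congrFun hYμ ⟨p, hpk⟩
    rw [mulVec, dotProduct, Fin.sum_univ_succ] at this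
    simpa [Ymat, rowVert_of_lt v σ p hpk, ← sum_coordN_mul_comm] using this
  obtain ⟨α, m, -, -, h0, hm⟩ :=
    hLF.exists_int_multiples σ k _ _ (fun i hi => coordN_of_le _ (le_of_lt hi)) hv
  simp only [coordN_of_le _ le_rfl, mul_zero] at h0 hm
  apply hμ
  ext j
  refine Fin.cases h0 (fun q => ?_) j
  simpa [coordN_of_lt] using hm (Fin.castLE k.isLt.le q)

theorem SimplexLatticeFace.exists_int_affine_eq_det_div (hLF : SimplexLatticeFace d v)
    (k : Fin d) :
    ∃ (α : ℤ) (m : Fin d → ℤ), (∀ i, k < i → m i = 0) ∧ m k = 1 ∧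
      ∀ x, (α : ℝ) + ∑ i, x i * (m i : ℝ)
        = (Xtil d v σ (k + 1) x).det / (Ymat d v σ (k + 1)).det := by
  set a : Fin d → ℝ := fun i => coordN (fun q : Fin (k + 1) => xtilCofactor v σ (k + 1) q.succ) i
  have hdet : ∀ x, (Xtil d v σ (k + 1) x).det = xtilCofactor v σ (k + 1) 0 + ∑ i, x i * a i :=
    fun x => by rw [det_Xtil, sum_coordN_mul_comm]
  have hak : a k = (Ymat d v σ (k + 1)).det := by
    rw [← xtilCofactor_last]
    exact coordN_of_lt _ (Nat.lt_succ_self k)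
  obtain ⟨α, m, hm0, hm1, hc, ha⟩ := hLF.exists_int_multiples σ k _ a
    (fun i hi => coordN_of_le _ hi)
    (fun p hp => by rw [← hdet]; exact det_Xtil_vertex v σ _ p (Nat.lt_succ_of_le hp))
  refine ⟨α, m, hm0, hm1, fun x => ?_⟩
  rw [eq_div_iff (hLF.det_Ymat_ne_zero σ k), hdet, hc, hak, add_mul, Finset.sum_mul]
  congr 1
  exact Finset.sum_congr rfl fun i _ => by rw [ha i, hak]; ring

end LatticeFace

theorem exists_lattice_preserving_transformation_general
    (d : ℕ) (v : Fin (d + 1) → Fin d → ℝ)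
    (hLF : SimplexLatticeFace d v) (σ : Equiv.Perm (Fin d)) :
    ∃ (α : Fin d → ℤ) (M : Matrix (Fin d) (Fin d) ℤ),
      (∀ i j : Fin d, j < i → M i j = 0)
      ∧ (∀ i : Fin d, M i i = 1)
      ∧ (∀ (x : Fin d → ℝ) (k : Fin d),
          (α k : ℝ) + ∑ i : Fin d, x i * (M i k : ℝ)
            = (Xtil d v σ ((k : ℕ) + 1) x).det / (Ymat d v σ ((k : ℕ) + 1)).det)
      ∧ Function.Bijective
          (fun (x : Fin d → ℝ) (k : Fin d) => (α k : ℝ) + ∑ i : Fin d, x i * (M i k : ℝ))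
      ∧ Set.BijOn
          (fun (x : Fin d → ℝ) (k : Fin d) => (α k : ℝ) + ∑ i : Fin d, x i * (M i k : ℝ))
          (latticePts d) (latticePts d) := by
  choose α m hm0 hm1 hm using hLF.exists_int_affine_eq_det_div σ
  let M : Matrix (Fin d) (Fin d) ℤ := (Matrix.of m).transpose
  have hM0 : M.IsUpperTriangular := fun i j hji => hm0 j i hji
  have hM1 : ∀ i, M i i = 1 := hm1
  have hdet : IsUnit M.det := by
    rw [Matrix.det_of_isUpperTriangular hM0, Finset.prod_eq_one fun i _ => hM1 i]
    exact isUnit_one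
  exact ⟨α, M, hM0, hM1, fun x k => hm k x, bijective_intAffine hdet α,
    bijOn_intAffine_latticePts hdet α⟩

theorem exists_lattice_preserving_transformation
    (d : ℕ) (hd : 1 ≤ d) (v : Fin (d + 1) → Fin d → ℝ)
    (hLF : SimplexLatticeFace d v) (σ : Equiv.Perm (Fin d)) :
    ∃ (α : Fin d → ℤ) (M : Matrix (Fin d) (Fin d) ℤ),
      (∀ i j : Fin d, j < i → M i j = 0)
      ∧ (∀ i : Fin d, M i i = 1)
      ∧ (∀ (x : Fin d → ℝ) (k : Fin d),
          (α k : ℝ) + ∑ i : Fin d, x i * (M i k : ℝ)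
            = (Xtil d v σ ((k : ℕ) + 1) x).det / (Ymat d v σ ((k : ℕ) + 1)).det)
      ∧ Function.Bijective
          (fun (x : Fin d → ℝ) (k : Fin d) => (α k : ℝ) + ∑ i : Fin d, x i * (M i k : ℝ))
      ∧ Set.BijOn
          (fun (x : Fin d → ℝ) (k : Fin d) => (α k : ℝ) + ∑ i : Fin d, x i * (M i k : ℝ))
          (latticePts d) (latticePts d) :=
  exists_lattice_preserving_transformation_general d v hLF σ
end
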